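/- arXiv:math/0703614 — 9 statements merged into one kernel-verified Lean document; each statement's English description precedes it below -/
import Mathlib

section
/- Let X, B₁, ..., B_k be finite nonempty subsets of an abelian group such that |X + Bᵢ| ≤ αᵢ|X| for each i. Then there exists a nonempty subset X₁ ⊆ X with |X₁ + B₁ + ⋯ + B_k| ≤ α₁⋯α_k |X₁|. -/
/-!
Let `S = B₁ + ⋯ + B_k` and take `X₁ ⊆ X` minimising `|X₁ + S| / |X₁|`, with minimum `μ`; then
every `W ⊆ X` satisfies `μ |W| ≤ |W + S|`, and it remains to show `μ ≤ α₁ ⋯ α_k`.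

Such lower bounds multiply under cartesian products (a layer-cake count over the fibres), so `X^k`
expands by `μ^k` under `S^k`. In `G^k` the sets `C_j = B_{1+j} × ⋯ × B_{k+j}` (indices mod `k`)
each satisfy `|X^k + C_j| ≤ (α₁ ⋯ α_k) |X^k|` and add up to `S^k`, so Petridis' inequality
applied to their union `D` gives `μ^k ≤ |X' + k D| / |X'| ≤ (k α₁ ⋯ α_k)^k` for a suitable `X'`.
Running the same argument on the tensor powers `X^m`, `B_i^m` yields `μ^m ≤ k (α₁ ⋯ α_k)^m` for
every `m`, and the factor `k` disappears as `m → ∞`.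
-/

open Finset Fintype Pointwise

lemma le_of_forall_pow_le_mul_pow {a b C : ℝ} (hb : 0 ≤ b) (h : ∀ m : ℕ, a ^ m ≤ C * b ^ m) :
    a ≤ b := by
  by_contra! hba
  obtain rfl | hb₀ := hb.eq_or_lt
  · exact hba.not_ge (by simpa using h 1)
  obtain ⟨m, hm⟩ := pow_unbounded_of_one_lt C ((one_lt_div hb₀).2 hba)
  rw [div_pow, lt_div_iff₀ (pow_pos hb₀ m)] at hm
  exact (h m).not_gt hm

namespace Finset

lemma sum_card_filter_lt_eq_sum {α : Type*} (s : Finset α) (f : α → ℕ) {N : ℕ}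
    (hf : ∀ a ∈ s, f a ≤ N) : ∑ j ∈ range N, #{a ∈ s | j < f a} = ∑ a ∈ s, f a := by
  simp_rw [card_filter]
  rw [sum_comm]
  refine sum_congr rfl fun a ha => ?_
  rw [← card_filter, show {j ∈ range N | j < f a} = range (f a) by
    ext j; simp only [mem_filter, mem_range]; have := hf a ha; omega, card_range]

lemma card_add_biUnion_le {G J : Type*} [Add G] [DecidableEq G] (A : Finset G) (s : Finset J)
    (C : J → Finset G) : #(A + s.biUnion C) ≤ ∑ j ∈ s, #(A + C j) := by
  refine (card_le_card fun z hz => ?_).trans card_biUnion_le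
  obtain ⟨a, ha, c, hc, rfl⟩ := mem_add.1 hz
  obtain ⟨j, hj, hcj⟩ := mem_biUnion.1 hc
  exact mem_biUnion.2 ⟨j, hj, add_mem_add ha hcj⟩

lemma sum_subset_card_nsmul {G J : Type*} [AddCommMonoid G] [DecidableEq G] {s : Finset J}
    {C : J → Finset G} {D : Finset G} (h : ∀ j ∈ s, C j ⊆ D) : ∑ j ∈ s, C j ⊆ #s • D := by
  rw [← sum_const, ← coe_subset, coe_sum, coe_sum]
  exact Set.finsetSum_subset_finsetSum _ _ _ fun j hj => coe_subset.2 (h j hj)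

end Finset

namespace Fintype

variable {G : Type*} [AddCommMonoid G] [DecidableEq G]

lemma piFinset_sum {ι J : Type*} [Fintype ι] [DecidableEq ι] (s : Finset J)
    (f : J → ι → Finset G) : ∑ j ∈ s, piFinset (f j) = piFinset fun i => ∑ j ∈ s, f j i := by
  classical
  induction s using Finset.induction_on with
  | empty => exact (piFinset_singleton 0).symm
  | insert j s hj ih => simp_rw [sum_insert hj, ih, piFinset_add]

lemma piFinset_const_sum_eq_sum_piFinset_add {k : ℕ} [NeZero k] (B : Fin k → Finset G) :
    (piFinset fun _ : Fin k => ∑ i, B i) = ∑ j, piFinset fun i => B (i + j) := by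
  rw [piFinset_sum]
  exact congrArg _ <| funext fun i => (Fintype.sum_equiv (Equiv.addLeft i) _ B fun _ => rfl).symm

end Fintype

namespace Finset

/-- Every subset of `X` has magnification ratio at least `μ` with respect to `S`, in Plünnecke's
terminology. -/
def ExpandsBy {G : Type*} [Add G] [DecidableEq G] (X S : Finset G) (μ : ℝ) : Prop :=
  ∀ W ⊆ X, μ * #W ≤ #(W + S)

variable {G H K : Type*} [AddCommGroup G] [DecidableEq G] [AddCommGroup H] [DecidableEq H]
  [AddCommGroup K] [DecidableEq K]

lemma ExpandsBy.mono {X S W : Finset G} {μ : ℝ} (hX : ExpandsBy X S μ) (hWX : W ⊆ X) :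
    ExpandsBy W S μ :=
  fun V hVW => hX V (hVW.trans hWX)

lemma ExpandsBy.image {F : Type*} [FunLike F G H] [AddHomClass F G H] {X S : Finset G} {μ : ℝ}
    (hX : ExpandsBy X S μ) (f : F) (hf : Function.Injective f) :
    ExpandsBy (X.image f) (S.image f) μ := by
  intro W hW
  obtain ⟨W', hW'X, rfl⟩ := subset_image_iff.1 hW
  rw [← image_add, card_image_of_injective _ hf, card_image_of_injective _ hf]
  exact hX W' hW'X

lemma exists_expandsBy_card_add_div_card {X : Finset G} (hX : X.Nonempty) (S : Finset G) :
    ∃ W ⊆ X, W.Nonempty ∧ ExpandsBy X S (#(W + S) / #W) := by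
  obtain ⟨W, hW, hWmin⟩ := exists_min_image (X.powerset.filter Finset.Nonempty)
    (fun W => (#(W + S) / #W : ℝ)) ⟨X, by simpa using hX⟩
  simp only [mem_filter, mem_powerset] at hW hWmin
  refine ⟨W, hW.1, hW.2, fun V hVX => ?_⟩
  obtain rfl | hV := V.eq_empty_or_nonempty
  · simp
  rw [← le_div_iff₀ (Nat.cast_pos.2 hV.card_pos)]
  exact hWmin V ⟨hVX, hV⟩

/-- Petridis' form of the Plünnecke inequality. -/
lemma ExpandsBy.card_add_nsmul_le {A B : Finset G} {r : ℝ} (hA : ExpandsBy A B r)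
    (hAB : #(A + B) ≤ r * #A) (n : ℕ) : #(A + n • B) ≤ r ^ n * #A := by
  obtain rfl | hA₀ := A.eq_empty_or_nonempty
  · simp
  have hpos : (0 : ℝ) < #A := Nat.cast_pos.2 hA₀.card_pos
  have hmin : ∀ A' ⊆ A, #(A + B) * #A' ≤ #(A' + B) * #A := fun A' hA' => by
    have : (#(A + B) * #A' : ℝ) ≤ #(A' + B) * #A := by
      nlinarith [hA A' hA', (Nat.cast_nonneg (α := ℝ) #A')]
    exact_mod_cast this
  induction n with
  | zero => simp
  | succ n ih =>
    refine le_of_mul_le_mul_right ?_ hpos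
    calc (#(A + (n + 1) • B) * #A : ℝ)
        = #(n • B + A + B) * #A := by rw [succ_nsmul, ← add_assoc, add_comm A]
      _ ≤ #(A + B) * #(n • B + A) := mod_cast pluennecke_petridis_inequality_add _ hmin
      _ ≤ (r * #A) * (r ^ n * #A) := by
          rw [add_comm _ A]; gcongr; exact (Nat.cast_nonneg _).trans hAB
      _ = r ^ (n + 1) * #A * #A := by ring

/-- The fibre of `W + T ×ˢ 0` over `y + t` contains a translate of the fibre of `W` over `y`, so
adding `T` to the `j`-th layer `{y | j < #Wᵧ}` of `W` lands in the `j`-th layer of `W + T ×ˢ 0`;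
summing over `j` counts both sets. -/
lemma ExpandsBy.prod_right {Y T : Finset H} {ν : ℝ} (hY : ExpandsBy Y T ν) (Z : Finset K) :
    ExpandsBy (Y ×ˢ Z) (T ×ˢ 0) ν := by
  intro W hWYZ
  set A := W + T ×ˢ (0 : Finset K)
  set w : H → ℕ := fun y => #{q ∈ W | q.1 = y}
  set a : H → ℕ := fun p => #{q ∈ A | q.1 = p}
  set N := #W + #A
  have hwa : ∀ y, ∀ t ∈ T, w y ≤ a (y + t) := fun y t ht => by
    refine card_le_card_of_injOn (· + (t, 0)) (fun q hq => ?_) (add_left_injective _).injOn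
    simp only [coe_filter, Set.mem_ofPred_eq] at hq ⊢
    exact ⟨add_mem_add hq.1 (mk_mem_product ht zero_mem_zero), by simp [hq.2]⟩
  have hlayer : ∀ j, {y ∈ Y | j < w y} + T ⊆ {p ∈ Y + T | j < a p} := by
    intro j p hp
    obtain ⟨y, hy, t, ht, rfl⟩ := mem_add.1 hp
    rw [mem_filter] at hy ⊢
    exact ⟨add_mem_add hy.1 ht, hy.2.trans_le (hwa y t ht)⟩
  have hW : #W = ∑ j ∈ range N, #{y ∈ Y | j < w y} := by
    rw [sum_card_filter_lt_eq_sum _ _ fun y _ => (card_filter_le _ _).trans (Nat.le_add_right _ _)]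
    exact card_eq_sum_card_fiberwise fun q hq => (mem_product.1 (hWYZ hq)).1
  have hA : #A = ∑ j ∈ range N, #{p ∈ Y + T | j < a p} := by
    rw [sum_card_filter_lt_eq_sum _ _ fun p _ => (card_filter_le _ _).trans (Nat.le_add_left _ _)]
    refine card_eq_sum_card_fiberwise fun q hq => ?_
    obtain ⟨u, hu, v, hv, rfl⟩ := mem_add.1 hq
    exact add_mem_add (mem_product.1 (hWYZ hu)).1 (mem_product.1 hv).1
  calc ν * #W = ∑ j ∈ range N, ν * #{y ∈ Y | j < w y} := by rw [hW]; push_cast; rw [mul_sum]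
    _ ≤ ∑ j ∈ range N, (#({y ∈ Y | j < w y} + T) : ℝ) :=
        sum_le_sum fun j _ => hY _ (filter_subset _ _)
    _ ≤ ∑ j ∈ range N, (#{p ∈ Y + T | j < a p} : ℝ) :=
        sum_le_sum fun j _ => mod_cast card_le_card (hlayer j)
    _ = #A := by rw [hA]; push_cast; rfl

lemma ExpandsBy.prod_left {X S : Finset G} {μ : ℝ} (hX : ExpandsBy X S μ) (Z : Finset K) :
    ExpandsBy (Z ×ˢ X) (0 ×ˢ S) μ := by
  simpa [image_swap_product] using
    (hX.prod_right Z).image (AddEquiv.prodComm : G × K ≃+ K × G) (AddEquiv.injective _)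

lemma ExpandsBy.prod {Y T : Finset H} {X S : Finset G} {ν μ : ℝ} (hY : ExpandsBy Y T ν)
    (hX : ExpandsBy X S μ) (hμ : 0 ≤ μ) : ExpandsBy (Y ×ˢ X) (T ×ˢ S) (ν * μ) := by
  intro W hW
  have hWT : W + T ×ˢ 0 ⊆ (Y + T) ×ˢ X := by
    simpa [product_add_product_comm] using add_subset_add_right (t := T ×ˢ 0) hW
  calc ν * μ * #W = μ * (ν * #W) := by ring
    _ ≤ μ * #(W + T ×ˢ 0) := by gcongr; exact hY.prod_right X W hW
    _ ≤ #(W + T ×ˢ 0 + 0 ×ˢ S) := hX.prod_left (Y + T) _ hWT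
    _ = #(W + T ×ˢ S) := by rw [add_assoc, product_add_product_comm, add_zero, zero_add]

lemma ExpandsBy.pi {X S : Finset G} {μ : ℝ} (hX : ExpandsBy X S μ) (hμ : 0 ≤ μ) (n : ℕ) :
    ExpandsBy (piFinset fun _ : Fin n => X) (piFinset fun _ => S) (μ ^ n) := by
  induction n with
  | zero => intro W _; simp
  | succ n ih =>
    let e := (Fin.consLinearEquiv ℤ fun _ : Fin (n + 1) => G).toAddEquiv
    have himage : ∀ A : Finset G, (A ×ˢ piFinset fun _ : Fin n => A).image e =
        piFinset fun _ => A := fun A => by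
      ext f
      simp only [mem_image, mem_product, mem_piFinset, Prod.exists]
      constructor
      · rintro ⟨a, v, ⟨ha, hv⟩, rfl⟩ i
        exact Fin.cases ha hv i
      · exact fun hf => ⟨f 0, Fin.tail f, ⟨hf 0, fun i => hf _⟩, Fin.cons_self_tail f⟩
    simpa [himage, pow_succ'] using (hX.prod ih (pow_nonneg hμ n)).image e e.injective

theorem ExpandsBy.pow_le {k : ℕ} [NeZero k] {X : Finset G} {B : Fin k → Finset G}
    {α : Fin k → ℝ} {μ : ℝ} (hX : X.Nonempty) (hXB : ∀ i, #(X + B i) ≤ α i * #X) (hμ : 0 ≤ μ)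
    (hXS : ExpandsBy X (∑ i, B i) μ) : μ ^ k ≤ (k * ∏ i, α i) ^ k := by
  set P := ∏ i, α i
  set Xk : Finset (Fin k → G) := piFinset fun _ => X
  set C : Fin k → Finset (Fin k → G) := fun j => piFinset fun i => B (i + j)
  set D := univ.biUnion C
  have hXk : (0 : ℝ) < #Xk := Nat.cast_pos.2 hX.piFinset_const.card_pos
  have hXC : ∀ j, (#(Xk + C j) : ℝ) ≤ P * #Xk := fun j => by
    rw [← piFinset_add, card_piFinset, card_piFinset]
    push_cast
    calc ∏ i, (#(X + B (i + j)) : ℝ) ≤ ∏ i, α (i + j) * #X :=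
          prod_le_prod (fun _ _ => by positivity) fun i _ => hXB _
      _ = P * ∏ i, (#X : ℝ) := by
          rw [prod_mul_distrib, Fintype.prod_equiv (Equiv.addRight j) (fun i => α (i + j)) α
            fun _ => rfl]
  have hXD : (#(Xk + D) : ℝ) ≤ (k * P) * #Xk := calc
    (#(Xk + D) : ℝ) ≤ ∑ j, (#(Xk + C j) : ℝ) := mod_cast card_add_biUnion_le _ _ _
    _ ≤ ∑ _j : Fin k, P * #Xk := sum_le_sum fun j _ => hXC j
    _ = k * P * #Xk := by simp [mul_assoc]
  obtain ⟨W, hWXk, hW, hWD⟩ := exists_expandsBy_card_add_div_card hX.piFinset_const D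
  set r := (#(W + D) : ℝ) / #W
  have hW₀ : (0 : ℝ) < #W := Nat.cast_pos.2 hW.card_pos
  have hr : r ≤ k * P := le_of_mul_le_mul_right ((hWD Xk subset_rfl).trans hXD) hXk
  have hS : piFinset (fun _ => ∑ i, B i) ⊆ k • D := by
    rw [piFinset_const_sum_eq_sum_piFinset_add]
    simpa using sum_subset_card_nsmul (s := univ) fun j _ => subset_biUnion_of_mem C (mem_univ j)
  refine le_of_mul_le_mul_right ?_ hW₀
  calc μ ^ k * #W ≤ #(W + piFinset fun _ => ∑ i, B i) := hXS.pi hμ k W hWXk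
    _ ≤ #(W + k • D) := mod_cast card_le_card (add_subset_add_left hS)
    _ ≤ r ^ k * #W := (hWD.mono hWXk).card_add_nsmul_le (div_mul_cancel₀ _ hW₀.ne').ge k
    _ ≤ (k * P) ^ k * #W := by gcongr

theorem ExpandsBy.le_prod {k : ℕ} [NeZero k] {X : Finset G} {B : Fin k → Finset G}
    {α : Fin k → ℝ} {μ : ℝ} (hX : X.Nonempty) (hXB : ∀ i, #(X + B i) ≤ α i * #X) (hμ : 0 ≤ μ)
    (hXS : ExpandsBy X (∑ i, B i) μ) : μ ≤ ∏ i, α i := by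
  have hα : ∀ i, 0 ≤ α i := fun i =>
    nonneg_of_mul_nonneg_left ((Nat.cast_nonneg _).trans (hXB i)) (Nat.cast_pos.2 hX.card_pos)
  have hP : 0 ≤ ∏ i, α i := prod_nonneg fun i _ => hα i
  refine le_of_forall_pow_le_mul_pow (C := k) hP fun m => ?_
  have hXmBm : ∀ i, #((piFinset fun _ : Fin m => X) + piFinset fun _ => B i) ≤
      α i ^ m * #(piFinset fun _ : Fin m => X) := fun i => by
    rw [← piFinset_add, card_piFinset_const, card_piFinset_const]
    push_cast
    rw [← mul_pow]
    gcongr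
    exact hXB i
  have hXmSm : ExpandsBy (piFinset fun _ : Fin m => X) (∑ i, piFinset fun _ => B i) (μ ^ m) := by
    rw [piFinset_sum]
    exact hXS.pi hμ m
  have hpow := hXmSm.pow_le hX.piFinset_const hXmBm (pow_nonneg hμ m)
  rw [prod_pow] at hpow
  exact (pow_le_pow_iff_left₀ (by positivity) (by positivity) (NeZero.ne k)).1 hpow

end Finset

theorem plunnecke_ruzsa_general {G : Type*} [AddCommGroup G] [DecidableEq G]
    (k : ℕ) (X : Finset G) (B : Fin k → Finset G) (α : Fin k → ℝ)
    (hX : X.Nonempty)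
    (h : ∀ i, ((X + B i).card : ℝ) ≤ α i * X.card) :
    ∃ X₁ ⊆ X, X₁.Nonempty ∧
      ((X₁ + ∑ i, B i).card : ℝ) ≤ (∏ i, α i) * X₁.card := by
  obtain rfl | hk := eq_or_ne k 0
  · exact ⟨X, subset_rfl, hX, by simp⟩
  have : NeZero k := ⟨hk⟩
  obtain ⟨X₁, hX₁X, hX₁, hexp⟩ := exists_expandsBy_card_add_div_card hX (∑ i, B i)
  refine ⟨X₁, hX₁X, hX₁, ?_⟩
  have hX₁₀ : (0 : ℝ) < #X₁ := Nat.cast_pos.2 hX₁.card_pos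
  calc (#(X₁ + ∑ i, B i) : ℝ) = #(X₁ + ∑ i, B i) / #X₁ * #X₁ := (div_mul_cancel₀ _ hX₁₀.ne').symm
    _ ≤ (∏ i, α i) * #X₁ := by gcongr; exact hexp.le_prod hX h (by positivity)

theorem plunnecke_ruzsa {G : Type*} [AddCommGroup G] [DecidableEq G]
    (k : ℕ) (X : Finset G) (B : Fin k → Finset G) (α : Fin k → ℝ)
    (hX : X.Nonempty) (hB : ∀ i, (B i).Nonempty) (hα : ∀ i, 0 < α i)
    (h : ∀ i, ((X + B i).card : ℝ) ≤ α i * X.card) :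
    ∃ X₁ ⊆ X, X₁.Nonempty ∧
      ((X₁ + ∑ i, B i).card : ℝ) ≤ (∏ i, α i) * X₁.card :=
  plunnecke_ruzsa_general k X B α hX h
end

section
/- Let A be a finite subset of F_p and let a, b ∈ A with aA ∩ bA nonempty. Then |aA + bA| ≤ |A + A|² / |aA ∩ bA|. -/
open Finset Pointwise

theorem sum_dilates_bound {p : ℕ} [Fact p.Prime]
    (A : Finset (ZMod p)) (a b : ZMod p) (ha : a ∈ A) (hb : b ∈ A)
    (hne : (a • A ∩ b • A).Nonempty) :
    ((a • A + b • A).card : ℝ) ≤ (A + A).card ^ 2 / (a • A ∩ b • A).card := by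
  set X := a • A ∩ b • A with hX
  have hXpos : (0 : ℝ) < X.card := by exact_mod_cast hne.card_pos
  rw [le_div_iff₀ hXpos]
  have key : (a • A + b • A).card * X.card ≤ (a • A + X).card * (X + b • A).card :=
    Finset.ruzsa_triangle_inequality_add_add_add _ _ _
  have h1 : (a • A + X).card ≤ (A + A).card := by
    calc (a • A + X).card ≤ (a • A + a • A).card :=
          card_le_card (add_subset_add_left inter_subset_left)
      _ = (a • (A + A)).card := by rw [smul_add]
      _ ≤ (A + A).card := smul_finset_card_le
  have h2 : (X + b • A).card ≤ (A + A).card := by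
    calc (X + b • A).card ≤ (b • A + b • A).card :=
          card_le_card (add_subset_add_right inter_subset_right)
      _ = (b • (A + A)).card := by rw [smul_add]
      _ ≤ (A + A).card := smul_finset_card_le
  have := key.trans (Nat.mul_le_mul h1 h2)
  calc ((a • A + b • A).card : ℝ) * X.card = ((a • A + b • A).card * X.card : ℕ) := by push_cast; ring
    _ ≤ ((A + A).card * (A + A).card : ℕ) := by exact_mod_cast this
    _ = (A + A).card ^ 2 := by push_cast; ring
end

section
/- Let A be a finite subset of F_p and let a, b ∈ A with aA ∩ bA nonempty. Then |aA - bA| ≤ |A + A|² / |aA ∩ bA|. -/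
/-!
Apply Ruzsa's triangle inequality `|Y - Z| |X| ≤ |Y + X| |Z + X|` with `Y = aA`, `Z = bA` and
`X = aA ∩ bA`. Since `X` lies in both dilates, `aA + X ⊆ a(A + A)` and `bA + X ⊆ b(A + A)`, and
dilating does not increase cardinality.
-/

open Finset Pointwise

namespace Finset

variable {α β : Type*} [DecidableEq β]

theorem card_smul_finset_add_le_of_subset [Monoid α] [AddMonoid β] [DistribMulAction α β]
    {A X : Finset β} {c : α} (hX : X ⊆ c • A) : #(c • A + X) ≤ #(A + A) :=
  calc #(c • A + X) ≤ #(c • A + c • A) := card_le_card (add_subset_add_left hX)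
    _ = #(c • (A + A)) := by rw [smul_add]
    _ ≤ #(A + A) := card_smul_finset_le

theorem card_smul_finset_sub_smul_finset_mul_card_inter_le [Monoid α] [AddGroup β]
    [DistribMulAction α β] (A : Finset β) (a b : α) :
    #(a • A - b • A) * #(a • A ∩ b • A) ≤ #(A + A) ^ 2 :=
  calc #(a • A - b • A) * #(a • A ∩ b • A)
      ≤ #(a • A + a • A ∩ b • A) * #(b • A + a • A ∩ b • A) :=
        ruzsa_triangle_inequality_sub_add_add _ _ _
    _ ≤ #(A + A) * #(A + A) :=
        Nat.mul_le_mul (card_smul_finset_add_le_of_subset inter_subset_left)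
          (card_smul_finset_add_le_of_subset inter_subset_right)
    _ = #(A + A) ^ 2 := (sq _).symm

end Finset

theorem diff_dilates_bound_general {p : ℕ}
    (A : Finset (ZMod p)) (a b : ZMod p)
    (hne : (a • A ∩ b • A).Nonempty) :
    ((a • A - b • A).card : ℝ) ≤ (A + A).card ^ 2 / (a • A ∩ b • A).card := by
  rw [le_div_iff₀ (by exact_mod_cast hne.card_pos)]
  exact_mod_cast card_smul_finset_sub_smul_finset_mul_card_inter_le A a b

theorem diff_dilates_bound {p : ℕ} [Fact p.Prime]
    (A : Finset (ZMod p)) (a b : ZMod p) (ha : a ∈ A) (hb : b ∈ A)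
    (hne : (a • A ∩ b • A).Nonempty) :
    ((a • A - b • A).card : ℝ) ≤ (A + A).card ^ 2 / (a • A ∩ b • A).card :=
  diff_dilates_bound_general A a b hne
end

section
/- Let A₁ be a finite subset of F_p with 1 < |A₁| and (A₁-A₁)/(A₁-A₁) ≠ F_p, where the quotient set is {(x-y)/(z-w) : x,y,z,w ∈ A₁, z ≠ w}. Then there exist a₁, a₂, b₁, b₂ ∈ A₁ with a₁ ≠ a₂ such that 1 + (b₁-b₂)/(a₁-a₂) ∉ (A₁-A₁)/(A₁-A₁). -/
/-! If every shift `1 + q` of an element `q` of the quotient set stayed in it, the quotient set would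
contain `0` and be closed under `x ↦ 1 + x`, hence be all of `𝔽_p`. -/

open Finset Pointwise

def diffQuotientSet {K : Type*} [DivisionRing K] (A : Finset K) : Set K :=
  {r | ∃ x ∈ A, ∃ y ∈ A, ∃ z ∈ A, ∃ w ∈ A, z ≠ w ∧ r = (x - y) / (z - w)}

lemma zero_mem_diffQuotientSet {K : Type*} [DivisionRing K] {A : Finset K} (hA : 1 < #A) :
    0 ∈ diffQuotientSet A := by
  obtain ⟨a, ha, b, hb, hab⟩ := one_lt_card.mp hA
  exact ⟨a, ha, a, ha, a, ha, b, hb, hab, by simp⟩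

lemma ZMod.eq_univ_of_zero_mem_of_one_add_mem {n : ℕ} [NeZero n] {S : Set (ZMod n)}
    (h0 : 0 ∈ S) (hS : ∀ x ∈ S, 1 + x ∈ S) : S = Set.univ := by
  refine Set.eq_univ_of_forall fun r => ?_
  obtain ⟨k, rfl⟩ := ZMod.natCast_zmod_surjective r
  induction k with
  | zero => simpa using h0
  | succ k ih => simpa [add_comm] using hS _ ih

theorem exists_shift_outside_quotient_set {p : ℕ} [Fact p.Prime]
    (A₁ : Finset (ZMod p)) (hcard : 1 < A₁.card)
    (hne : {r : ZMod p | ∃ x ∈ A₁, ∃ y ∈ A₁, ∃ z ∈ A₁, ∃ w ∈ A₁,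
        z ≠ w ∧ r = (x - y) / (z - w)} ≠ Set.univ) :
    ∃ a₁ ∈ A₁, ∃ a₂ ∈ A₁, ∃ b₁ ∈ A₁, ∃ b₂ ∈ A₁, a₁ ≠ a₂ ∧
      1 + (b₁ - b₂) / (a₁ - a₂) ∉
        {r : ZMod p | ∃ x ∈ A₁, ∃ y ∈ A₁, ∃ z ∈ A₁, ∃ w ∈ A₁,
          z ≠ w ∧ r = (x - y) / (z - w)} := by
  by_contra! hshift
  refine hne (ZMod.eq_univ_of_zero_mem_of_one_add_mem (zero_mem_diffQuotientSet hcard) ?_)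
  rintro _ ⟨x, hx, y, hy, z, hz, w, hw, hzw, rfl⟩
  exact hshift z hz w hw x hx y hy hzw
end

section
/- Let A₁ ⊆ F_p with 1 < |A₁| < p^{1/2}, and suppose a₁, a₂, b₁, b₂ ∈ A₁ satisfy a₁ ≠ a₂ and (b₁-b₂)/(a₁-a₂) + 1 ∉ (A₁-A₁)/(A₁-A₁). Then for every A′ ⊆ A₁ with |A′| ≥ |A₁|/2, |(a₁-a₂)A′ + (a₁-a₂)A′ + (b₁-b₂)A′| ≥ c|A₁|² for an absolute constant c > 0. -/
/-!
The map `(x, y) ↦ l x + l y + m y` sends `A' × A'` into `l • A' + l • A' + m • A'`, and it is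
injective: a collision `l x + (l + m) y = l x' + (l + m) y'` with `y ≠ y'` would give
`m / l + 1 = (x - x') / (y' - y)`, an element of `(A₁ - A₁) / (A₁ - A₁)`. Hence the sumset has
at least `|A'|² ≥ |A₁|² / 4` elements.
-/

open Finset Pointwise

section
variable {K : Type*} [Field K]

def differenceQuotientSet (A : Finset K) : Set K :=
  {r | ∃ x ∈ A, ∃ y ∈ A, ∃ z ∈ A, ∃ w ∈ A, z ≠ w ∧ r = (x - y) / (z - w)}

theorem differenceQuotientSet_mono {A B : Finset K} (h : A ⊆ B) :
    differenceQuotientSet A ⊆ differenceQuotientSet B := by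
  rintro r ⟨x, hx, y, hy, z, hz, w, hw, hzw, rfl⟩
  exact ⟨x, h hx, y, h hy, z, h hz, w, h hw, hzw, rfl⟩

theorem injOn_of_div_add_one_notMem_differenceQuotientSet {A : Finset K} {l m : K}
    (hl : l ≠ 0) (h : m / l + 1 ∉ differenceQuotientSet A) :
    Set.InjOn (fun q : K × K => l * q.1 + l * q.2 + m * q.2) (A ×ˢ A : Finset (K × K)) := by
  rintro ⟨x, y⟩ hxy ⟨x', y'⟩ hxy' heq
  simp only [coe_product, Set.mem_prod, mem_coe] at hxy hxy' heq
  obtain rfl | hyy := eq_or_ne y y'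
  · simpa using mul_left_cancel₀ hl (by linear_combination heq : l * x = l * x')
  · refine absurd ⟨x, hxy.1, x', hxy'.1, y', hxy'.2, y, hxy.2, hyy.symm, ?_⟩ h
    have : y' - y ≠ 0 := sub_ne_zero.mpr hyy.symm
    field_simp
    linear_combination -heq

variable [DecidableEq K]

theorem sq_card_le_card_smul_add_smul_add_smul {A : Finset K} {l m : K}
    (hl : l ≠ 0) (h : m / l + 1 ∉ differenceQuotientSet A) :
    #A ^ 2 ≤ #(l • A + l • A + m • A) := by
  rw [sq, ← card_product]
  refine card_le_card_of_injOn _ ?_ (injOn_of_div_add_one_notMem_differenceQuotientSet hl h)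
  rintro ⟨x, y⟩ hq
  rw [coe_product, Set.mem_prod] at hq
  exact add_mem_add (add_mem_add (smul_mem_smul_finset hq.1) (smul_mem_smul_finset hq.2))
    (smul_mem_smul_finset hq.2)

end

theorem glibichuk_konyagin_expansion :
    ∃ c : ℝ, 0 < c ∧
      ∀ (p : ℕ) [Fact p.Prime], ∀ (A₁ : Finset (ZMod p)),
        1 < A₁.card → A₁.card ^ 2 < p →
        ∀ a₁ ∈ A₁, ∀ a₂ ∈ A₁, ∀ b₁ ∈ A₁, ∀ b₂ ∈ A₁, a₁ ≠ a₂ →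
        (b₁ - b₂) / (a₁ - a₂) + 1 ∉
          {r : ZMod p | ∃ x ∈ A₁, ∃ y ∈ A₁, ∃ z ∈ A₁, ∃ w ∈ A₁,
            z ≠ w ∧ r = (x - y) / (z - w)} →
        ∀ A' ⊆ A₁, (A₁.card : ℝ) / 2 ≤ A'.card →
          c * A₁.card ^ 2 ≤
            (((a₁ - a₂) • A' + (a₁ - a₂) • A' + (b₁ - b₂) • A').card : ℝ) := by
  refine ⟨1 / 4, by norm_num, ?_⟩
  intro p _ A₁ _ _ a₁ _ a₂ _ b₁ _ b₂ _ hne hnot A' hA' hcard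
  have hsq : #A' ^ 2 ≤ #((a₁ - a₂) • A' + (a₁ - a₂) • A' + (b₁ - b₂) • A') :=
    sq_card_le_card_smul_add_smul_add_smul (sub_ne_zero.mpr hne)
      fun hmem => hnot (differenceQuotientSet_mono hA' hmem)
  calc 1 / 4 * (#A₁ : ℝ) ^ 2 = (#A₁ / 2 : ℝ) ^ 2 := by ring
    _ ≤ (#A' : ℝ) ^ 2 := by gcongr
    _ ≤ _ := by exact_mod_cast hsq
end

section
/- Let A₁ ⊆ F_p with 1 < |A₁| < p^{1/2} and (A₁-A₁)/(A₁-A₁) = F_p. Then there exist a₁, a₂, b₁, b₂ ∈ A₁ with b₁ ≠ b₂ such that |(a₁-a₂)A₁ + (b₁-b₂)A₁| ≥ c|A₁|² for an absolute constant c > 0. -/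
/-!
Pigeonhole over the `p` possible values of the ratio `(x - y) / (z - w)` produces some `r`
represented by at most `|A|²` quadruples from `A⁴`, and by hypothesis `r = a / b` with
`a = a₁ - a₂`, `b = b₁ - b₂ ≠ 0`. A collision `a u + b v = a u' + b v'` of the map
`A × A → aA + bA` either has `u = u'`, hence `v = v'`, or gives the representation
`(v' - v) / (u - u') = a / b`; so there are at most `2|A|²` collisions, and Cauchy–Schwarz yields
`|A|⁴ ≤ |aA + bA| · 2|A|²`.
-/

open Finset Pointwise

lemma Finset.card_sq_le_card_image_mul_card_collisions {α β : Type*} [DecidableEq β]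
    (s : Finset α) (f : α → β) :
    #s ^ 2 ≤ #(s.image f) * #{x ∈ s ×ˢ s | f x.1 = f x.2} := by
  have hcollisions : #{x ∈ s ×ˢ s | f x.1 = f x.2} =
      ∑ c ∈ s.image f, #{a ∈ s | f a = c} ^ 2 := by
    rw [card_eq_sum_card_fiberwise (f := fun x => f x.1) (t := s.image f)
      (fun x hx => mem_image_of_mem f (mem_product.1 (mem_filter.1 hx).1).1)]
    refine sum_congr rfl fun c _ => ?_
    rw [sq, ← card_product, filter_filter, ← filter_product]
    congr 1
    exact filter_congr fun x _ => ⟨fun ⟨h, hc⟩ => ⟨hc, h ▸ hc⟩, fun ⟨h₁, h₂⟩ => ⟨h₁.trans h₂.symm, h₁⟩⟩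
  calc #s ^ 2 = (∑ c ∈ s.image f, #{a ∈ s | f a = c}) ^ 2 := by rw [← card_eq_sum_card_image]
    _ ≤ #(s.image f) * ∑ c ∈ s.image f, #{a ∈ s | f a = c} ^ 2 := sq_sum_le_card_mul_sum_sq
    _ = #(s.image f) * #{x ∈ s ×ˢ s | f x.1 = f x.2} := by rw [hcollisions]

lemma Finset.image_mul_add_mul_product {R : Type*} [Mul R] [Add R] [DecidableEq R]
    (a b : R) (A B : Finset R) :
    (A ×ˢ B).image (fun x => a * x.1 + b * x.2) = a • A + b • B := by
  ext t
  simp only [mem_image, mem_product, mem_add, mem_smul_finset, smul_eq_mul]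
  constructor
  · rintro ⟨⟨u, v⟩, ⟨hu, hv⟩, rfl⟩
    exact ⟨_, ⟨u, hu, rfl⟩, _, ⟨v, hv, rfl⟩, rfl⟩
  · rintro ⟨-, ⟨u, hu, rfl⟩, -, ⟨v, hv, rfl⟩, rfl⟩
    exact ⟨(u, v), ⟨hu, hv⟩, rfl⟩

section Field

variable {F : Type*} [Field F] [DecidableEq F]

def quotientRepresentations (A : Finset F) (r : F) : Finset ((F × F) × F × F) :=
  {q ∈ (A ×ˢ A) ×ˢ A ×ˢ A | q.2.1 ≠ q.2.2 ∧ (q.1.1 - q.1.2) / (q.2.1 - q.2.2) = r}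

lemma exists_card_quotientRepresentations_le [Fintype F] (A : Finset F)
    (hA : #A ^ 2 ≤ Fintype.card F) : ∃ r, #(quotientRepresentations A r) ≤ #A ^ 2 := by
  have hcard : #{q ∈ (A ×ˢ A) ×ˢ A ×ˢ A | q.2.1 ≠ q.2.2} ≤ #(univ : Finset F) * #A ^ 2 :=
    calc _ ≤ #((A ×ˢ A) ×ˢ A ×ˢ A) := card_filter_le _ _
      _ = #A ^ 2 * #A ^ 2 := by simp only [card_product]; ring
      _ ≤ #(univ : Finset F) * #A ^ 2 := Nat.mul_le_mul_right _ (by rwa [card_univ])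
  obtain ⟨r, -, hr⟩ := exists_card_fiber_le_of_card_le_mul univ_nonempty hcard
    (f := fun q => (q.1.1 - q.1.2) / (q.2.1 - q.2.2))
  exact ⟨r, by rwa [quotientRepresentations, ← filter_filter]⟩

lemma card_collisions_mul_add_mul_le {a b : F} (hb : b ≠ 0) (A : Finset F) :
    #{x ∈ (A ×ˢ A) ×ˢ A ×ˢ A | a * x.1.1 + b * x.1.2 = a * x.2.1 + b * x.2.2} ≤
      #A ^ 2 + #(quotientRepresentations A (a / b)) := by
  set C := {x ∈ (A ×ˢ A) ×ˢ A ×ˢ A | a * x.1.1 + b * x.1.2 = a * x.2.1 + b * x.2.2}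
  have hdiag : #{x ∈ C | x.1.1 = x.2.1} ≤ #A ^ 2 := by
    rw [sq, ← card_product]
    refine card_le_card_of_injOn Prod.fst (fun x hx => ?_) fun x hx y hy hxy => ?_
    · exact (mem_product.1 (mem_filter.1 (mem_filter.1 hx).1).1).1
    · have hsnd : ∀ x ∈ ({x ∈ C | x.1.1 = x.2.1} : Finset _), x.2 = x.1 := fun x hx => by
        obtain ⟨hxC, h₁⟩ := mem_filter.1 hx
        have h := (mem_filter.1 hxC).2
        rw [h₁, add_right_inj] at h
        exact Prod.ext h₁.symm (mul_left_cancel₀ hb h).symm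
      exact Prod.ext hxy (by rw [hsnd x hx, hsnd y hy]; exact hxy)
  -- `a u + b v = a u' + b v'` with `u ≠ u'` means `(v' - v) / (u - u') = a / b`.
  have hoff : #{x ∈ C | x.1.1 ≠ x.2.1} ≤ #(quotientRepresentations A (a / b)) := by
    refine card_le_card_of_injOn (fun x => ((x.2.2, x.1.2), (x.1.1, x.2.1)))
      (fun x hx => ?_) fun x _ y _ hxy => ?_
    · obtain ⟨hxC, hne⟩ := mem_filter.1 hx
      obtain ⟨hx, h⟩ := mem_filter.1 hxC
      simp only [mem_product] at hx
      refine mem_filter.2 ⟨by simp [hx], hne, ?_⟩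
      rw [div_eq_div_iff (sub_ne_zero_of_ne hne) hb]
      linear_combination -h
    · simp only [Prod.ext_iff] at hxy ⊢
      obtain ⟨⟨h₁, h₂⟩, h₃, h₄⟩ := hxy
      exact ⟨⟨h₃, h₂⟩, h₄, h₁⟩
  rw [← card_filter_add_card_filter_not (s := C) (fun x => x.1.1 = x.2.1)]
  exact add_le_add hdiag hoff

theorem card_sq_le_two_mul_card_smul_add_smul {a b : F} (hb : b ≠ 0) {A : Finset F}
    (hA : #(quotientRepresentations A (a / b)) ≤ #A ^ 2) :
    #A ^ 2 ≤ 2 * #(a • A + b • A) := by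
  have hcs := card_sq_le_card_image_mul_card_collisions (A ×ˢ A) fun x => a * x.1 + b * x.2
  rw [image_mul_add_mul_product, card_product, ← sq] at hcs
  have hcollisions := (card_collisions_mul_add_mul_le hb A).trans (Nat.add_le_add_left hA _)
  obtain hA₀ | hA₀ := (#A ^ 2).eq_zero_or_pos
  · simp [hA₀]
  refine Nat.le_of_mul_le_mul_right ?_ hA₀
  calc #A ^ 2 * #A ^ 2 ≤ #(a • A + b • A) * (#A ^ 2 + #A ^ 2) := by
        rw [← sq]; exact hcs.trans (Nat.mul_le_mul_left _ hcollisions)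
    _ = 2 * #(a • A + b • A) * #A ^ 2 := by ring

end Field

theorem glibichuk_konyagin_second_case :
    ∃ c : ℝ, 0 < c ∧
      ∀ (p : ℕ) [Fact p.Prime], ∀ (A₁ : Finset (ZMod p)),
        1 < A₁.card → A₁.card ^ 2 < p →
        {r : ZMod p | ∃ x ∈ A₁, ∃ y ∈ A₁, ∃ z ∈ A₁, ∃ w ∈ A₁,
          z ≠ w ∧ r = (x - y) / (z - w)} = Set.univ →
        ∃ a₁ ∈ A₁, ∃ a₂ ∈ A₁, ∃ b₁ ∈ A₁, ∃ b₂ ∈ A₁, b₁ ≠ b₂ ∧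
          c * A₁.card ^ 2 ≤ (((a₁ - a₂) • A₁ + (b₁ - b₂) • A₁).card : ℝ) := by
  refine ⟨1 / 2, by norm_num, fun p _ A₁ _ hAp hquot => ?_⟩
  obtain ⟨r, hr⟩ := exists_card_quotientRepresentations_le A₁ (by rw [ZMod.card]; exact hAp.le)
  obtain ⟨a₁, ha₁, a₂, ha₂, b₁, hb₁, b₂, hb₂, hb, rfl⟩ := hquot.symm ▸ Set.mem_univ r
  refine ⟨a₁, ha₁, a₂, ha₂, b₁, hb₁, b₂, hb₂, hb, ?_⟩
  have key : ((#A₁ ^ 2 : ℕ) : ℝ) ≤ (2 * #((a₁ - a₂) • A₁ + (b₁ - b₂) • A₁) : ℕ) :=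
    Nat.cast_le.2 (card_sq_le_two_mul_card_smul_add_smul (sub_ne_zero_of_ne hb) hr)
  push_cast at key
  linarith
end

section
/- Let A ⊆ F_p with 0 ∉ A, let b₀ ∈ A, let N ≥ 1 with |b₀A ∩ aᵢA| ≥ N for i = 1,2,3,4 where a₁,a₂,a₃,a₄ ∈ A. Then |a₁A - a₂A + a₃A - a₄A| ≤ |A+A|⁸ / (N⁴|A|³). -/
/-!
Each `Bᵢ` that meets `X` in a large set can be traded for a copy of `X` by Ruzsa's triangle
inequality through `X ∩ Bᵢ`, at the cost of a factor `|Bᵢ + Bᵢ| / |X ∩ Bᵢ|`. After four such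
trades only `X + X + X + X` is left, which Plünnecke–Ruzsa bounds by `|X + X|⁴ / |X|³`. With
`X = b₀A` and `Bᵢ = aᵢA`, dilation by a nonzero scalar preserves `|A|` and `|A + A|`.
-/

open Finset Pointwise

section AddCommGroup

variable {G : Type*} [AddCommGroup G] [DecidableEq G]

theorem card_add_mul_card_inter_le (S X B : Finset G) :
    #(S + B) * #(X ∩ B) ≤ #(S + X) * #(B + B) :=
  (ruzsa_triangle_inequality_add_add_add S (X ∩ B) B).trans <|
    Nat.mul_le_mul (card_le_card (add_subset_add_left inter_subset_left))
      (card_le_card (add_subset_add_right inter_subset_right))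

theorem card_sub_mul_card_inter_le (S X B : Finset G) :
    #(S - B) * #(X ∩ B) ≤ #(S + X) * #(B + B) :=
  (ruzsa_triangle_inequality_sub_add_add S (X ∩ B) B).trans <|
    Nat.mul_le_mul (card_le_card (add_subset_add_left inter_subset_left))
      (card_le_card (add_subset_add_left inter_subset_right))

theorem card_sub_add_sub_mul_le (X B₁ B₂ B₃ B₄ : Finset G) :
    #(B₁ - B₂ + B₃ - B₄) * (#(X ∩ B₁) * #(X ∩ B₂) * #(X ∩ B₃) * #(X ∩ B₄)) ≤
      #(X + X + X + X) * (#(B₁ + B₁) * #(B₂ + B₂) * #(B₃ + B₃) * #(B₄ + B₄)) := by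
  have h₄ := card_sub_mul_card_inter_le (B₁ - B₂ + B₃) X B₄
  have h₃ := card_add_mul_card_inter_le (B₁ - B₂ + X) X B₃
  have h₂ := card_sub_mul_card_inter_le (B₁ + X + X) X B₂
  have h₁ := card_add_mul_card_inter_le (X + X + X) X B₁
  rw [add_right_comm] at h₄
  rw [show B₁ - B₂ + X + X = B₁ + X + X - B₂ by simp only [sub_eq_add_neg]; ac_rfl] at h₃
  rw [show B₁ + X + X + X = X + X + X + B₁ by ac_rfl] at h₂
  calc #(B₁ - B₂ + B₃ - B₄) * (#(X ∩ B₁) * #(X ∩ B₂) * #(X ∩ B₃) * #(X ∩ B₄))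
      = #(B₁ - B₂ + B₃ - B₄) * #(X ∩ B₄) * #(X ∩ B₃) * #(X ∩ B₂) * #(X ∩ B₁) := by ring
    _ ≤ #(B₁ - B₂ + X + B₃) * #(B₄ + B₄) * #(X ∩ B₃) * #(X ∩ B₂) * #(X ∩ B₁) := by gcongr
    _ = #(B₁ - B₂ + X + B₃) * #(X ∩ B₃) * #(X ∩ B₂) * #(X ∩ B₁) * #(B₄ + B₄) := by ring
    _ ≤ #(B₁ + X + X - B₂) * #(B₃ + B₃) * #(X ∩ B₂) * #(X ∩ B₁) * #(B₄ + B₄) := by gcongr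
    _ = #(B₁ + X + X - B₂) * #(X ∩ B₂) * #(X ∩ B₁) * #(B₃ + B₃) * #(B₄ + B₄) := by ring
    _ ≤ #(X + X + X + B₁) * #(B₂ + B₂) * #(X ∩ B₁) * #(B₃ + B₃) * #(B₄ + B₄) := by gcongr
    _ = #(X + X + X + B₁) * #(X ∩ B₁) * #(B₂ + B₂) * #(B₃ + B₃) * #(B₄ + B₄) := by ring
    _ ≤ #(X + X + X + X) * #(B₁ + B₁) * #(B₂ + B₂) * #(B₃ + B₃) * #(B₄ + B₄) := by gcongr
    _ = _ := by ring

theorem card_add_add_add_mul_pow_le (X : Finset G) :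
    #(X + X + X + X) * #X ^ 3 ≤ #(X + X) ^ 4 := by
  obtain rfl | hX := X.eq_empty_or_nonempty
  · simp
  have h := pluennecke_ruzsa_inequality_nsmul_add hX X 4
  rw [show 4 • X = X + X + X + X by abel] at h
  have : (#(X + X + X + X) : ℚ≥0) * #X ^ 3 ≤ (#(X + X) : ℚ≥0) ^ 4 :=
    calc (#(X + X + X + X) : ℚ≥0) * #X ^ 3 ≤ (#(X + X) / #X) ^ 4 * #X * #X ^ 3 := by gcongr
      _ = (#(X + X) : ℚ≥0) ^ 4 := by field_simp
  exact_mod_cast this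

theorem card_sub_add_sub_mul_pow_le (X B₁ B₂ B₃ B₄ : Finset G) :
    #(B₁ - B₂ + B₃ - B₄) * (#(X ∩ B₁) * #(X ∩ B₂) * #(X ∩ B₃) * #(X ∩ B₄)) * #X ^ 3 ≤
      #(X + X) ^ 4 * (#(B₁ + B₁) * #(B₂ + B₂) * #(B₃ + B₃) * #(B₄ + B₄)) := by
  grw [card_sub_add_sub_mul_le, mul_right_comm, card_add_add_add_mul_pow_le]

end AddCommGroup

theorem card_smul_finset_add_self₀ {K : Type*} [DivisionRing K] [DecidableEq K] {a : K}
    (ha : a ≠ 0) (A : Finset K) : #(a • A + a • A) = #(A + A) := by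
  rw [← smul_add, card_smul_finset₀ ha]

theorem four_fold_sumset_bound {p : ℕ} [Fact p.Prime]
    (A : Finset (ZMod p)) (h0 : (0 : ZMod p) ∉ A)
    (b₀ a₁ a₂ a₃ a₄ : ZMod p) (hb₀ : b₀ ∈ A)
    (ha₁ : a₁ ∈ A) (ha₂ : a₂ ∈ A) (ha₃ : a₃ ∈ A) (ha₄ : a₄ ∈ A)
    (N : ℕ) (hN : 1 ≤ N)
    (h₁ : N ≤ (b₀ • A ∩ a₁ • A).card) (h₂ : N ≤ (b₀ • A ∩ a₂ • A).card)
    (h₃ : N ≤ (b₀ • A ∩ a₃ • A).card) (h₄ : N ≤ (b₀ • A ∩ a₄ • A).card) :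
    ((a₁ • A - a₂ • A + a₃ • A - a₄ • A).card : ℝ) ≤
      (A + A).card ^ 8 / ((N : ℝ) ^ 4 * A.card ^ 3) := by
  have hne : ∀ a ∈ A, a ≠ 0 := fun a ha h ↦ h0 (h ▸ ha)
  have hdil : ∀ a ∈ A, #(a • A + a • A) = #(A + A) := fun a ha ↦
    card_smul_finset_add_self₀ (hne a ha) A
  have key := card_sub_add_sub_mul_pow_le (b₀ • A) (a₁ • A) (a₂ • A) (a₃ • A) (a₄ • A)
  rw [hdil b₀ hb₀, hdil a₁ ha₁, hdil a₂ ha₂, hdil a₃ ha₃, hdil a₄ ha₄,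
    card_smul_finset₀ (hne b₀ hb₀)] at key
  grw [← h₁, ← h₂, ← h₃, ← h₄] at key
  have hA : 0 < #A := card_pos.2 ⟨b₀, hb₀⟩
  rw [le_div_iff₀ (by positivity)]
  norm_cast
  exact le_of_eq_of_le (by ring) (key.trans_eq (by ring))
end

section
/- Let A ⊆ F_p with 2 ≤ |A| < p^{1/2}. Suppose there exist A₁ ⊆ A, b₀ ∈ A, and N ≥ 1 with |b₀A ∩ aA| ≥ N for all a ∈ A₁, and suppose (A₁-A₁)/(A₁-A₁) = F_p. Then |A₁|² N⁴ |A|³ ≤ C · |A+A|⁸ for an absolute constant C. -/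
/-!
Since `(A₁ - A₁)/(A₁ - A₁) = 𝔽_p` and `|A₁|² < p`, the Glibichuk–Konyagin argument (averaging the
additive energy `E(A₁, ξA₁)` over `ξ ≠ 0`, then Cauchy–Schwarz) gives `x, y, z, w ∈ A₁` with
`|A₁|² ≤ 2 |(z - w)A₁ + (x - y)A₁| ≤ 2 |zA - wA + xA - yA|`. Every dilate `aA` with `a ∈ A₁` meets
`b₀A` in at least `N` points, so Ruzsa's triangle inequality trades `aA` for `b₀A` at the cost
of a factor `|A + A|/N`. After four trades we reach `b₀A + b₀A - b₀A - b₀A`, whose size is at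
most `|A + A|⁴/|A|³` by Plünnecke–Ruzsa.
-/

open Finset Pointwise
open scoped Combinatorics.Additive

namespace Finset

section AddCommGroup
variable {G : Type*} [AddCommGroup G] [DecidableEq G]

lemma card_sub_mul_le_of_subset {S C X T U : Finset G} (hT : X ⊆ T) (hU : X ⊆ U) :
    #(S - C) * #X ≤ #(S + T) * #(C + U) :=
  (ruzsa_triangle_inequality_sub_add_add S X C).trans <| Nat.mul_le_mul
    (card_le_card (add_subset_add_left hT)) (card_le_card (add_subset_add_left hU))

lemma pow_four_mul_card_sub_add_sub_le {ι : Type*} {s : Set ι} {f : ι → Finset G}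
    {X : Finset G} {N P : ℕ} (h : ∀ i ∈ s, ∀ C, N * #(f i - C) ≤ P * #(C + X))
    {i j k l : ι} (hi : i ∈ s) (hj : j ∈ s) (hk : k ∈ s) (hl : l ∈ s) :
    N ^ 4 * #(f i - f j + (f k - f l)) ≤ P ^ 4 * #(X + X - X - X) := by
  -- Each identity puts the set reached so far into the form `f _ - C`, so that `h` applies.
  have e₁ : f i - f j + (f k - f l) = f i - (f j - f k + f l) := by
    simp only [sub_eq_add_neg, neg_add, neg_neg]; ac_rfl
  have e₂ : f j - f k + f l + X = f j - (f k - f l - X) := by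
    simp only [sub_eq_add_neg, neg_add, neg_neg]; ac_rfl
  have e₃ : f k - f l - X + X = f k - (f l + X - X) := by
    simp only [sub_eq_add_neg, neg_add, neg_neg]; ac_rfl
  have e₄ : f l + X - X + X = f l - (X - X - X) := by
    simp only [sub_eq_add_neg, neg_add, neg_neg]; ac_rfl
  have e₅ : X - X - X + X = X + X - X - X := by
    simp only [sub_eq_add_neg]; ac_rfl
  have h₁ := e₂ ▸ h i hi (f j - f k + f l)
  have h₂ := e₃ ▸ h j hj (f k - f l - X)
  have h₃ := e₄ ▸ h k hk (f l + X - X)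
  have h₄ := e₅ ▸ h l hl (X - X - X)
  rw [e₁]
  calc N ^ 4 * #(f i - (f j - f k + f l))
      = N ^ 3 * (N * #(f i - (f j - f k + f l))) := by ring
    _ ≤ N ^ 3 * (P * #(f j - (f k - f l - X))) := by gcongr
    _ = P * N ^ 2 * (N * #(f j - (f k - f l - X))) := by ring
    _ ≤ P * N ^ 2 * (P * #(f k - (f l + X - X))) := by gcongr
    _ = P ^ 2 * N * (N * #(f k - (f l + X - X))) := by ring
    _ ≤ P ^ 2 * N * (P * #(f l - (X - X - X))) := by gcongr
    _ = P ^ 3 * (N * #(f l - (X - X - X))) := by ring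
    _ ≤ P ^ 3 * (P * #(X + X - X - X)) := by gcongr
    _ = P ^ 4 * #(X + X - X - X) := by ring

lemma card_add_sub_sub_mul_pow_three_le (A : Finset G) :
    #(A + A - A - A) * #A ^ 3 ≤ #(A + A) ^ 4 := by
  obtain rfl | hA := A.eq_empty_or_nonempty
  · simp
  have h := pluennecke_ruzsa_inequality_nsmul_sub_nsmul_add hA A 2 2
  rw [two_nsmul, ← sub_sub] at h
  have hA₀ : (#A : ℚ≥0) ≠ 0 := by exact_mod_cast hA.card_pos.ne'
  have : (#(A + A - A - A) : ℚ≥0) * #A ^ 3 ≤ #(A + A) ^ 4 :=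
    calc (#(A + A - A - A) : ℚ≥0) * #A ^ 3
        ≤ ((#(A + A) : ℚ≥0) / #A) ^ (2 + 2) * #A * #A ^ 3 := by gcongr
      _ = (#(A + A) : ℚ≥0) ^ 4 := by
          rw [mul_assoc, ← pow_succ', div_pow, div_mul_cancel₀ _ (pow_ne_zero _ hA₀)]
  exact_mod_cast this

end AddCommGroup

section Module
variable {K V : Type*} [DivisionRing K] [AddCommGroup V] [Module K V] [DecidableEq V]

lemma sub_smul_finset_subset (a b : K) (s : Finset V) : (a - b) • s ⊆ a • s - b • s := by
  intro _ hy
  obtain ⟨x, hx, rfl⟩ := mem_smul_finset.1 hy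
  exact mem_sub.2
    ⟨a • x, smul_mem_smul_finset hx, b • x, smul_mem_smul_finset hx, (sub_smul a b x).symm⟩

lemma mul_card_smul_sub_le {a : K} (ha : a ≠ 0) {A C X : Finset V} {N : ℕ}
    (hN : N ≤ #(X ∩ a • A)) : N * #(a • A - C) ≤ #(A + A) * #(C + X) :=
  calc N * #(a • A - C) ≤ #(a • A - C) * #(X ∩ a • A) := by rw [mul_comm]; gcongr
    _ ≤ #(a • A + a • A) * #(C + X) :=
        card_sub_mul_le_of_subset inter_subset_right inter_subset_left
    _ = #(A + A) * #(C + X) := by rw [← smul_add, card_smul_finset₀ ha]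

end Module

section Field
variable {F : Type*} [Field F] [DecidableEq F]

lemma addEnergy_smul_eq_card_filter (B : Finset F) {ξ : F} (hξ : ξ ≠ 0) :
    E[B, ξ • B] = #{q ∈ (B ×ˢ B) ×ˢ B ×ˢ B | q.1.1 + ξ * q.2.1 = q.1.2 + ξ * q.2.2} := by
  refine card_nbij' (fun q ↦ (q.1, ξ⁻¹ * q.2.1, ξ⁻¹ * q.2.2))
    (fun q ↦ (q.1, ξ * q.2.1, ξ * q.2.2)) ?_ ?_ ?_ ?_ <;> intro q hq
  · simp_all [mem_smul_finset]
    obtain ⟨⟨-, ⟨c₁, hc₁, h₁⟩, c₂, hc₂, h₂⟩, -⟩ := hq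
    simp [← h₁, ← h₂, hξ, hc₁, hc₂]
  · simp_all [mem_smul_finset]
  · simp [hξ]
  · simp [hξ]

lemma card_filter_add_mul_eq_le_one (s : Finset F) {a₁ a₂ c₁ c₂ : F}
    (h : ¬(a₁ = a₂ ∧ c₁ = c₂)) : #{ξ ∈ s | a₁ + ξ * c₁ = a₂ + ξ * c₂} ≤ 1 := by
  refine card_le_one.2 fun ξ hξ ξ' hξ' ↦ ?_
  simp only [mem_filter] at hξ hξ'
  have hc : c₁ - c₂ ≠ 0 := by
    intro hc
    rw [sub_eq_zero] at hc
    subst hc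
    exact h ⟨add_right_cancel hξ.2, rfl⟩
  exact mul_right_cancel₀ hc (by linear_combination hξ.2 - hξ'.2)

variable [Fintype F]

lemma sum_addEnergy_smul_le (B : Finset F) :
    ∑ ξ ∈ univ.erase (0 : F), E[B, ξ • B] ≤ #B ^ 2 * (Fintype.card F - 1) + #B ^ 4 := by
  set S := (B ×ˢ B) ×ˢ B ×ˢ B
  set T : Finset F := univ.erase 0
  have hT : #T = Fintype.card F - 1 := card_erase_of_mem (mem_univ 0)
  set r : (F × F) × F × F → ℕ := fun q ↦ #{ξ ∈ T | q.1.1 + ξ * q.2.1 = q.1.2 + ξ * q.2.2}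
  have hdiag : #{q ∈ S | q.1.1 = q.1.2 ∧ q.2.1 = q.2.2} = #B ^ 2 := by
    rw [filter_product (p := fun a : F × F ↦ a.1 = a.2) (q := fun a : F × F ↦ a.1 = a.2),
      card_product, ← diag_eq_filter, diag_card, sq]
  calc ∑ ξ ∈ T, E[B, ξ • B]
      = ∑ q ∈ S, r q := by
        rw [sum_congr rfl fun ξ hξ ↦ addEnergy_smul_eq_card_filter B (ne_of_mem_erase hξ)]
        simp_rw [r, card_filter]
        exact sum_comm
    _ = ∑ q ∈ S with q.1.1 = q.1.2 ∧ q.2.1 = q.2.2, r q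
        + ∑ q ∈ S with ¬(q.1.1 = q.1.2 ∧ q.2.1 = q.2.2), r q :=
        (sum_filter_add_sum_filter_not _ _ _).symm
    _ ≤ #B ^ 2 * #T + #S * 1 := by
        gcongr
        · rw [← hdiag]
          exact sum_le_card_nsmul _ _ _ fun q _ ↦ card_filter_le _ _
        · refine (sum_le_card_nsmul _ _ 1 fun q hq ↦ ?_).trans
            (Nat.mul_le_mul_right _ (card_filter_le _ _))
          exact card_filter_add_mul_eq_le_one T (mem_filter.1 hq).2
    _ = #B ^ 2 * (Fintype.card F - 1) + #B ^ 4 := by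
        rw [hT]; simp [S, card_product]; ring

lemma exists_addEnergy_smul_le (B : Finset F) (hB : #B ^ 2 < Fintype.card F) :
    ∃ ξ : F, ξ ≠ 0 ∧ E[B, ξ • B] ≤ 2 * #B ^ 2 := by
  have hT : (univ.erase (0 : F)).Nonempty := ⟨1, mem_erase.2 ⟨one_ne_zero, mem_univ 1⟩⟩
  have hsum : ∑ ξ ∈ univ.erase (0 : F), E[B, ξ • B] ≤ ∑ _ξ ∈ univ.erase (0 : F), 2 * #B ^ 2 := by
    rw [sum_const, card_erase_of_mem (mem_univ 0), card_univ, smul_eq_mul]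
    have : #B ^ 2 ≤ Fintype.card F - 1 := by omega
    nlinarith [sum_addEnergy_smul_le B, Nat.mul_le_mul_left (#B ^ 2) this]
  obtain ⟨ξ, hξ, hle⟩ := exists_le_of_sum_le hT hsum
  exact ⟨ξ, ne_of_mem_erase hξ, hle⟩

lemma exists_sq_card_le_two_mul_card_add_smul (B : Finset F)
    (hB : #B ^ 2 < Fintype.card F) : ∃ ξ : F, ξ ≠ 0 ∧ #B ^ 2 ≤ 2 * #(B + ξ • B) := by
  obtain ⟨ξ, hξ, hE⟩ := exists_addEnergy_smul_le B hB
  refine ⟨ξ, hξ, ?_⟩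
  obtain rfl | hBne := B.eq_empty_or_nonempty
  · simp
  have hCS := le_card_add_mul_addEnergy B (ξ • B)
  rw [card_smul_finset₀ hξ] at hCS
  refine le_of_mul_le_mul_right ?_ (pow_pos hBne.card_pos 2)
  calc #B ^ 2 * #B ^ 2 ≤ #(B + ξ • B) * E[B, ξ • B] := hCS
    _ ≤ #(B + ξ • B) * (2 * #B ^ 2) := by gcongr
    _ = 2 * #(B + ξ • B) * #B ^ 2 := by ring

lemma exists_sq_card_le_two_mul_card_sub_smul_add_sub_smul (B : Finset F)
    (hB : #B ^ 2 < Fintype.card F)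
    (hquot : ∀ ξ : F, ∃ x ∈ B, ∃ y ∈ B, ∃ z ∈ B, ∃ w ∈ B, z ≠ w ∧ ξ = (x - y) / (z - w)) :
    ∃ x ∈ B, ∃ y ∈ B, ∃ z ∈ B, ∃ w ∈ B, #B ^ 2 ≤ 2 * #((z - w) • B + (x - y) • B) := by
  obtain ⟨ξ, -, hξ⟩ := exists_sq_card_le_two_mul_card_add_smul B hB
  obtain ⟨x, hx, y, hy, z, hz, w, hw, hzw, rfl⟩ := hquot ξ
  refine ⟨x, hx, y, hy, z, hz, w, hw, ?_⟩
  have hzw' : z - w ≠ 0 := sub_ne_zero.2 hzw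
  rwa [← card_smul_finset₀ hzw' (B + _), smul_add, smul_smul, mul_div_cancel₀ _ hzw'] at hξ

end Field

end Finset

theorem garaev_first_case :
    ∃ C : ℝ, 0 < C ∧
      ∀ (p : ℕ) [Fact p.Prime], ∀ (A A₁ : Finset (ZMod p)) (b₀ : ZMod p) (N : ℕ),
        2 ≤ A.card → A.card ^ 2 < p → (0 : ZMod p) ∉ A →
        A₁ ⊆ A → b₀ ∈ A → 1 ≤ N →
        (∀ a ∈ A₁, N ≤ (b₀ • A ∩ a • A).card) →
        {r : ZMod p | ∃ x ∈ A₁, ∃ y ∈ A₁, ∃ z ∈ A₁, ∃ w ∈ A₁,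
          z ≠ w ∧ r = (x - y) / (z - w)} = Set.univ →
        (A₁.card : ℝ) ^ 2 * (N : ℝ) ^ 4 * (A.card : ℝ) ^ 3 ≤ C * (A + A).card ^ 8 := by
  refine ⟨2, two_pos, fun p _ A A₁ b₀ N _ hAp hA₀ hA₁ hb₀ _ hN hquot ↦ ?_⟩
  have hne : ∀ a ∈ A, a ≠ 0 := fun a ha h ↦ hA₀ (h ▸ ha)
  obtain ⟨x, hx, y, hy, z, hz, w, hw, hGK⟩ := exists_sq_card_le_two_mul_card_sub_smul_add_sub_smul
    A₁ (by rw [ZMod.card]; exact (Nat.pow_le_pow_left (card_le_card hA₁) 2).trans_lt hAp)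
    (Set.eq_univ_iff_forall.1 hquot)
  have hcover : #((z - w) • A₁ + (x - y) • A₁) ≤ #(z • A - w • A + (x • A - y • A)) :=
    card_le_card <| add_subset_add
      ((smul_finset_subset_smul_finset hA₁).trans (sub_smul_finset_subset z w A))
      ((smul_finset_subset_smul_finset hA₁).trans (sub_smul_finset_subset x y A))
  have hchain := pow_four_mul_card_sub_add_sub_le (s := (A₁ : Set (ZMod p))) (f := (· • A))
    (fun a ha _ ↦ mul_card_smul_sub_le (hne a (hA₁ ha)) (hN a ha)) hz hw hx hy
  have hPR : #(b₀ • A + b₀ • A - b₀ • A - b₀ • A) * #A ^ 3 ≤ #(A + A) ^ 4 := by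
    simpa only [← smul_add, card_smul_finset₀ (hne b₀ hb₀)] using
      card_add_sub_sub_mul_pow_three_le (b₀ • A)
  have : #A₁ ^ 2 * N ^ 4 * #A ^ 3 ≤ 2 * #(A + A) ^ 8 :=
    calc #A₁ ^ 2 * N ^ 4 * #A ^ 3
        ≤ 2 * #(z • A - w • A + (x • A - y • A)) * N ^ 4 * #A ^ 3 := by
          gcongr; exact hGK.trans (by gcongr)
      _ = 2 * (N ^ 4 * #(z • A - w • A + (x • A - y • A))) * #A ^ 3 := by ring
      _ ≤ 2 * (#(A + A) ^ 4 * #(b₀ • A + b₀ • A - b₀ • A - b₀ • A)) * #A ^ 3 := by gcongr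
      _ = 2 * #(A + A) ^ 4 * (#(b₀ • A + b₀ • A - b₀ • A - b₀ • A) * #A ^ 3) := by ring
      _ ≤ 2 * #(A + A) ^ 4 * #(A + A) ^ 4 := by gcongr
      _ = 2 * #(A + A) ^ 8 := by ring
  exact_mod_cast this
end

section
/- Let A ⊆ F_p with 2 ≤ |A| < p^{1/2}. Suppose there exist A₁ ⊆ A, b₀ ∈ A, and N ≥ 1 with |b₀A ∩ aA| ≥ N for all a ∈ A₁, and suppose (A₁-A₁)/(A₁-A₁) ≠ F_p. Then |A₁|³ N⁴ |A|³ ≤ C · |A+A|⁹ for an absolute constant C. -/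
/-!
The quotient set `Q` of `A₁` contains `0` but is not all of `ZMod p`, so some `ξ ∈ Q` has
`ξ + 1 ∉ Q`. Then `(u, v) ↦ u + (ξ + 1) v` is injective on `A₁ × A₁`, and Plünnecke's inequality
with different summands (Ruzsa's tensor trick on top of Petridis' lemma) yields
`|A₁|³ ≤ 9 |A₁ + A₁| |A₁ + ξ A₁|`. Writing `ξ = (x - y) / (z - w)`, the set `A₁ + ξ A₁` is a
dilate of a subset of `zA - wA + xA - yA`. Every dilate `eA` with `e ∈ A₁` meets `b₀A` in at least
`N` points, so Ruzsa's triangle inequality trades it for `∓ b₀A` at the cost of a factor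
`|A + A| / N`. Four trades leave `b₀ (2A - 2A)`, which the Plünnecke–Ruzsa inequality bounds by
`|A + A|⁴ / |A|³`.
-/

open Finset Pointwise

namespace Finset

section Module

variable {R M : Type*} [DecidableEq M]

theorem add_smul_subset [Semiring R] [AddCommMonoid M] [Module R M] (a b : R) (s : Finset M) :
    (a + b) • s ⊆ a • s + b • s := by
  intro r hr
  obtain ⟨u, hu, rfl⟩ := mem_smul_finset.1 hr
  rw [add_smul]
  exact add_mem_add (smul_mem_smul_finset hu) (smul_mem_smul_finset hu)

theorem sub_smul_subset [Ring R] [AddCommGroup M] [Module R M] (a b : R) (s : Finset M) :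
    (a - b) • s ⊆ a • s - b • s := by
  intro r hr
  obtain ⟨u, hu, rfl⟩ := mem_smul_finset.1 hr
  rw [sub_smul]
  exact sub_mem_sub (smul_mem_smul_finset hu) (smul_mem_smul_finset hu)

end Module

section DistribMulAction

variable {α β : Type*} [Monoid α] [AddGroup β] [DistribMulAction α β] [DecidableEq β]

theorem smul_finset_sub (a : α) (s t : Finset β) : a • (s - t) = a • s - a • t := by
  rw [sub_eq_add_neg, smul_add, smul_finset_neg, ← sub_eq_add_neg]

end DistribMulAction

section AddCommGroup

variable {G : Type*} [AddCommGroup G] [DecidableEq G]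

theorem exists_subset_minimal_add_ratio (B : Finset G) {S : Finset G} (hS : S.Nonempty) :
    ∃ X ⊆ S, X.Nonempty ∧ #(X + B) * #S ≤ #(S + B) * #X ∧
      ∀ X' ⊆ X, #(X + B) * #X' ≤ #(X' + B) * #X := by
  have hS' : S ∈ S.powerset.erase ∅ := mem_erase_of_ne_of_mem hS.ne_empty (mem_powerset_self _)
  obtain ⟨X, hX, hmin⟩ :=
    exists_min_image (S.powerset.erase ∅) (fun X ↦ (#(X + B) / #X : ℚ≥0)) ⟨S, hS'⟩
  rw [mem_erase, mem_powerset, ← nonempty_iff_ne_empty] at hX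
  obtain ⟨hX, hXS⟩ := hX
  have ratio_le {Y : Finset G} (hY : Y.Nonempty) (hYS : Y ⊆ S) : #(X + B) * #Y ≤ #(Y + B) * #X :=
    mod_cast (div_le_div_iff₀ (by positivity) (by positivity)).1
      (hmin Y (mem_erase_of_ne_of_mem hY.ne_empty (mem_powerset.2 hYS)))
  refine ⟨X, hXS, hX, ratio_le hS Subset.rfl, fun X' hX' ↦ ?_⟩
  obtain rfl | hX'ne := X'.eq_empty_or_nonempty
  · simp
  exact ratio_le hX'ne (hX'.trans hXS)

theorem exists_subset_card_add_add_mul_sq_le (B : Finset G) {S : Finset G} (hS : S.Nonempty) :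
    ∃ X ⊆ S, X.Nonempty ∧ #(X + B + B) * #S ^ 2 ≤ #X * #(S + B) ^ 2 := by
  obtain ⟨X, hXS, hX, hratio, hXmin⟩ := exists_subset_minimal_add_ratio B hS
  refine ⟨X, hXS, hX, Nat.le_of_mul_le_mul_right ?_ hX.card_pos⟩
  have petridis : #(X + B + B) * #X ≤ #(X + B) ^ 2 := by
    simpa [add_comm B X, sq] using pluennecke_petridis_inequality_add B hXmin
  calc #(X + B + B) * #S ^ 2 * #X = #(X + B + B) * #X * #S ^ 2 := by ring
    _ ≤ (#(X + B) * #S) ^ 2 := by rw [mul_pow]; gcongr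
    _ ≤ (#(S + B) * #X) ^ 2 := by gcongr
    _ = #X * #(S + B) ^ 2 * #X := by ring

theorem exists_subset_card_add_add_mul_sq_le_nine_mul (B₁ B₂ : Finset G) {S : Finset G}
    (hS : S.Nonempty) :
    ∃ X ⊆ S, X.Nonempty ∧ #(X + B₁ + B₂) * #S ^ 2 ≤ 9 * #X * #(S + B₁) * #(S + B₂) := by
  wlog hle : #(S + B₁) ≤ #(S + B₂) generalizing B₁ B₂
  · obtain ⟨X, hXS, hX, hle'⟩ := this B₂ B₁ (le_of_not_ge hle)
    exact ⟨X, hXS, hX, by rw [add_right_comm]; linarith⟩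
  obtain rfl | hB₁ := B₁.eq_empty_or_nonempty
  · exact ⟨S, Subset.rfl, hS, by simp⟩
  set h := #(S + B₁)
  set k := #(S + B₂)
  have hh : 0 < h := (hS.add hB₁).card_pos
  -- Tensor trick: in `G × ℤ`, `f ≈ k / h` copies of `B₁` on consecutive levels and one copy of
  -- `B₂` above them keep `|S × {0} + B| ≤ f h + k ≤ 3k`, while `X × {0} + B + B` contains `f`
  -- translates of `X + B₁ + B₂`.
  set f := k / h + 1
  have hfk : k ≤ f * h := by have := Nat.lt_div_mul_add (a := k) hh; simp only [f]; linarith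
  have hfh : f * h ≤ 2 * k := by have := Nat.div_mul_le_self k h; simp only [f]; linarith
  set I : Finset ℤ := Ico 0 f
  have hI : #I = f := by simp [I]
  set B : Finset (G × ℤ) := B₁ ×ˢ I ∪ B₂ ×ˢ {(f : ℤ)}
  have hSB : #(S ×ˢ {0} + B) ≤ f * h + k := by
    rw [add_union, product_add_product_comm, product_add_product_comm, singleton_zero, zero_add,
      zero_add]
    refine (card_union_le _ _).trans ?_
    rw [card_product, card_product, hI, card_singleton, mul_one, mul_comm]
  obtain ⟨X', hX'S, hX', hX'B⟩ :=
    exists_subset_card_add_add_mul_sq_le B (hS.product (singleton_nonempty 0))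
  rw [product_singleton, subset_map_iff] at hX'S
  obtain ⟨X, hXS, rfl⟩ := hX'S
  rw [← product_singleton] at hX'B hX'
  refine ⟨X, hXS, hX'.fst, Nat.le_of_mul_le_mul_right (c := f) ?_ (Nat.succ_pos _)⟩
  have hlift : #(X + B₁ + B₂) * f ≤ #(X ×ˢ {0} + B + B) := by
    calc #(X + B₁ + B₂) * f = #((X + B₁ + B₂) ×ˢ ({0} + I + {(f : ℤ)})) := by
          simp [card_add_singleton, hI]
      _ ≤ #(X ×ˢ {0} + B + B) := by
          rw [← product_add_product_comm, ← product_add_product_comm]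
          gcongr
          exacts [subset_union_left, subset_union_right]
  calc #(X + B₁ + B₂) * #S ^ 2 * f = #(X + B₁ + B₂) * f * #(S ×ˢ {(0 : ℤ)}) ^ 2 := by simp; ring
    _ ≤ #(X ×ˢ {0}) * #(S ×ˢ {0} + B) ^ 2 := (Nat.mul_le_mul_right _ hlift).trans hX'B
    _ ≤ #X * (f * h + k) ^ 2 := by simp only [card_product, card_singleton, mul_one]; gcongr
    _ ≤ #X * (3 * k) ^ 2 := by gcongr; omega
    _ = 9 * #X * k * k := by ring
    _ ≤ 9 * #X * k * (f * h) := by gcongr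
    _ = 9 * #X * h * k * f := by ring

theorem card_add_mul_card_inter_le (V X Y : Finset G) :
    #(V + X) * #(X ∩ Y) ≤ #(V - Y) * #(X + X) := by
  calc #(V + X) * #(X ∩ Y) = #(V - -X) * #(X ∩ Y) := by rw [sub_neg_eq_add]
    _ ≤ #(V - X ∩ Y) * #(-X - X ∩ Y) := ruzsa_triangle_inequality_sub_sub_sub _ _ _
    _ = #(V - X ∩ Y) * #(X + X ∩ Y) := by rw [← card_neg (X + _), neg_add, ← sub_eq_add_neg]
    _ ≤ #(V - Y) * #(X + X) := by gcongr <;> simp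

theorem card_sub_mul_card_inter_le (V X Y : Finset G) :
    #(V - X) * #(X ∩ Y) ≤ #(V + Y) * #(X + X) := by
  have := card_add_mul_card_inter_le V (-X) (-Y)
  rwa [← sub_eq_add_neg, sub_neg_eq_add, ← neg_inter, card_neg, ← neg_add, card_neg] at this

theorem card_sub_add_sub_mul_pow_le {𝒳 : Set (Finset G)} {Y : Finset G} {N s : ℕ}
    (hN : ∀ X ∈ 𝒳, N ≤ #(X ∩ Y)) (hs : ∀ X ∈ 𝒳, #(X + X) ≤ s) {X₁ X₂ X₃ X₄ : Finset G}
    (h₁ : X₁ ∈ 𝒳) (h₂ : X₂ ∈ 𝒳) (h₃ : X₃ ∈ 𝒳) (h₄ : X₄ ∈ 𝒳) :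
    #(X₁ - X₂ + (X₃ - X₄)) * N ^ 4 ≤ #(Y + Y - Y - Y) * s ^ 4 := by
  have peel_add {V X} (hX : X ∈ 𝒳) : #(V + X) * N ≤ #(V - Y) * s :=
    (Nat.mul_le_mul_left _ (hN X hX)).trans
      ((card_add_mul_card_inter_le V X Y).trans (Nat.mul_le_mul_left _ (hs X hX)))
  have peel_sub {V X} (hX : X ∈ 𝒳) : #(V - X) * N ≤ #(V + Y) * s :=
    (Nat.mul_le_mul_left _ (hN X hX)).trans
      ((card_sub_mul_card_inter_le V X Y).trans (Nat.mul_le_mul_left _ (hs X hX)))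
  obtain ⟨e₁, e₂, e₃, e₄, e₅⟩ :
      X₁ - X₂ + (X₃ - X₄) = X₁ + X₃ - X₄ - X₂ ∧ X₁ + X₃ - X₄ + Y = X₁ - X₄ + Y + X₃ ∧
      X₁ - X₄ + Y - Y = X₁ + Y - Y - X₄ ∧ X₁ + Y - Y + Y = Y - Y + Y + X₁ ∧
      Y - Y + Y - Y = Y + Y - Y - Y := by
    refine ⟨?_, ?_, ?_, ?_, ?_⟩ <;> simp only [sub_eq_add_neg] <;> ac_rfl
  calc #(X₁ - X₂ + (X₃ - X₄)) * N ^ 4 = #(X₁ + X₃ - X₄ - X₂) * N * N ^ 3 := by rw [e₁]; ring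
    _ ≤ #(X₁ + X₃ - X₄ + Y) * s * N ^ 3 := Nat.mul_le_mul_right _ (peel_sub h₂)
    _ = #(X₁ - X₄ + Y + X₃) * N * (s * N ^ 2) := by rw [e₂]; ring
    _ ≤ #(X₁ - X₄ + Y - Y) * s * (s * N ^ 2) := Nat.mul_le_mul_right _ (peel_add h₃)
    _ = #(X₁ + Y - Y - X₄) * N * (s ^ 2 * N) := by rw [e₃]; ring
    _ ≤ #(X₁ + Y - Y + Y) * s * (s ^ 2 * N) := Nat.mul_le_mul_right _ (peel_sub h₄)
    _ = #(Y - Y + Y + X₁) * N * s ^ 3 := by rw [e₄]; ring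
    _ ≤ #(Y - Y + Y - Y) * s * s ^ 3 := Nat.mul_le_mul_right _ (peel_add h₁)
    _ = #(Y + Y - Y - Y) * s ^ 4 := by rw [e₅]; ring

theorem card_nsmul_sub_nsmul_mul_pow_le {A : Finset G} (hA : A.Nonempty) (m n : ℕ) :
    #(m • A - n • A) * #A ^ (m + n) ≤ #(A + A) ^ (m + n) * #A := by
  have h := pluennecke_ruzsa_inequality_nsmul_sub_nsmul_add hA A m n
  have : (0 : ℚ≥0) < #A := mod_cast hA.card_pos
  rw [div_pow, div_mul_eq_mul_div, le_div_iff₀ (by positivity)] at h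
  exact_mod_cast h

end AddCommGroup

end Finset

theorem ZMod.exists_mem_add_one_notMem {n : ℕ} [NeZero n] {S : Set (ZMod n)} (h0 : 0 ∈ S)
    (hS : S ≠ Set.univ) : ∃ ξ ∈ S, ξ + 1 ∉ S := by
  by_contra! h
  refine hS (Set.eq_univ_of_forall fun x ↦ ?_)
  rw [← ZMod.natCast_zmod_val x]
  induction x.val with
  | zero => simpa using h0
  | succ m ih => simpa using h _ ih

namespace Finset

variable {K : Type*} [Field K] {A A₁ X Y : Finset K} {ξ : K}

/-- The quotient set `(A - A) / (A - A)`, without the junk quotients `r / 0 = 0`. -/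
def quotientSet (A : Finset K) : Set K :=
  {r | ∃ x ∈ A, ∃ y ∈ A, ∃ z ∈ A, ∃ w ∈ A, z ≠ w ∧ r = (x - y) / (z - w)}

theorem zero_mem_quotientSet (hA : 1 < #A) : 0 ∈ A.quotientSet := by
  obtain ⟨x, hx, y, hy, hxy⟩ := one_lt_card.1 hA
  exact ⟨x, hx, x, hx, x, hx, y, hy, hxy, by simp⟩

variable [DecidableEq K]

theorem card_mul_card_le_card_add_smul (hξ : ξ ∉ A.quotientSet) (hX : X ⊆ A) (hY : Y ⊆ A) :
    #X * #Y ≤ #(X + ξ • Y) := by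
  rw [← card_product]
  refine card_le_card_of_injOn (fun p ↦ p.1 + ξ * p.2) (fun p hp ↦ ?_) ?_
  · rw [mem_coe, mem_product] at hp
    exact add_mem_add hp.1 (smul_mem_smul_finset hp.2)
  · rintro ⟨u, z⟩ hp ⟨u', z'⟩ hp' heq
    simp only [coe_product, Set.mem_prod, mem_coe] at hp hp' heq
    obtain rfl | hzz := eq_or_ne z z'
    · simpa using heq
    refine absurd ⟨u, hX hp.1, u', hX hp'.1, z', hY hp'.2, z, hY hp.2, hzz.symm, ?_⟩ hξ
    rw [eq_div_iff (sub_ne_zero.2 hzz.symm)]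
    linear_combination -heq

theorem card_pow_three_le_of_add_one_notMem_quotientSet (hA : A.Nonempty)
    (hξ : ξ + 1 ∉ A.quotientSet) : #A ^ 3 ≤ 9 * #(A + A) * #(A + ξ • A) := by
  obtain ⟨X, hXA, hX, hXB⟩ := exists_subset_card_add_add_mul_sq_le_nine_mul A (ξ • A) hA
  have hXlow : #X * #A ≤ #(X + A + ξ • A) :=
    calc #X * #A ≤ #(X + (ξ + 1) • A) := card_mul_card_le_card_add_smul hξ hXA Subset.rfl
      _ ≤ #(X + A + ξ • A) := by
        rw [add_assoc, add_comm A]; gcongr; simpa using add_smul_subset ξ 1 A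
  refine Nat.le_of_mul_le_mul_left ?_ hX.card_pos
  calc #X * #A ^ 3 = #X * #A * #A ^ 2 := by ring
    _ ≤ #(X + A + ξ • A) * #A ^ 2 := by gcongr
    _ ≤ 9 * #X * #(A + A) * #(A + ξ • A) := hXB
    _ = #X * (9 * #(A + A) * #(A + ξ • A)) := by ring

theorem exists_card_add_smul_le_of_mem_quotientSet (hξ : ξ ∈ A₁.quotientSet) (hA : A₁ ⊆ A) :
    ∃ x ∈ A₁, ∃ y ∈ A₁, ∃ z ∈ A₁, ∃ w ∈ A₁,
      #(A₁ + ξ • A₁) ≤ #(z • A - w • A + (x • A - y • A)) := by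
  obtain ⟨x, hx, y, hy, z, hz, w, hw, hzw, rfl⟩ := hξ
  refine ⟨x, hx, y, hy, z, hz, w, hw, ?_⟩
  have hzw' : z - w ≠ 0 := sub_ne_zero.2 hzw
  calc #(A₁ + ((x - y) / (z - w)) • A₁) = #((z - w) • A₁ + (x - y) • A₁) := by
        rw [← card_smul_finset₀ hzw', smul_add, smul_smul, mul_div_cancel₀ _ hzw']
    _ ≤ #(z • A - w • A + (x • A - y • A)) := by
        gcongr <;> refine (sub_smul_subset _ _ _).trans (sub_subset_sub ?_ ?_) <;> gcongr

theorem card_smul_sub_add_smul_sub_mul_pow_le {E : Finset K} {b₀ : K} {N : ℕ} (hb₀ : b₀ ≠ 0)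
    (hE : 0 ∉ E) (hN : ∀ e ∈ E, N ≤ #(b₀ • A ∩ e • A)) {x y z w : K} (hx : x ∈ E) (hy : y ∈ E)
    (hz : z ∈ E) (hw : w ∈ E) :
    #(z • A - w • A + (x • A - y • A)) * N ^ 4 ≤ #(2 • A - 2 • A) * #(A + A) ^ 4 := by
  have hN' : ∀ X ∈ (· • A) '' (E : Set K), N ≤ #(X ∩ b₀ • A) := by
    rintro _ ⟨e, he, rfl⟩
    rw [inter_comm]
    exact hN e he
  have hs : ∀ X ∈ (· • A) '' (E : Set K), #(X + X) ≤ #(A + A) := by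
    rintro _ ⟨e, he, rfl⟩
    rw [← smul_add, card_smul_finset₀ (ne_of_mem_of_not_mem he hE)]
  have hY : b₀ • A + b₀ • A - b₀ • A - b₀ • A = b₀ • (2 • A - 2 • A) := by
    rw [two_nsmul, smul_finset_sub, smul_add, sub_sub]
  have := card_sub_add_sub_mul_pow_le hN' hs (Set.mem_image_of_mem _ hz)
    (Set.mem_image_of_mem _ hw) (Set.mem_image_of_mem _ hx) (Set.mem_image_of_mem _ hy)
  rwa [hY, card_smul_finset₀ hb₀] at this

end Finset

theorem garaev_second_case :
    ∃ C : ℝ, 0 < C ∧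
      ∀ (p : ℕ) [Fact p.Prime], ∀ (A A₁ : Finset (ZMod p)) (b₀ : ZMod p) (N : ℕ),
        2 ≤ A.card → A.card ^ 2 < p → (0 : ZMod p) ∉ A →
        A₁ ⊆ A → 1 < A₁.card → b₀ ∈ A → 1 ≤ N →
        (∀ a ∈ A₁, N ≤ (b₀ • A ∩ a • A).card) →
        {r : ZMod p | ∃ x ∈ A₁, ∃ y ∈ A₁, ∃ z ∈ A₁, ∃ w ∈ A₁,
          z ≠ w ∧ r = (x - y) / (z - w)} ≠ Set.univ →
        (A₁.card : ℝ) ^ 3 * (N : ℝ) ^ 4 * (A.card : ℝ) ^ 3 ≤ C * (A + A).card ^ 9 := by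
  refine ⟨9, by norm_num, fun p _ A A₁ b₀ N _ _ hA0 hA₁A hA₁ hb₀ _ hN hR ↦ ?_⟩
  have hA₁ne : A₁.Nonempty := card_pos.1 (by omega)
  have hAne : A.Nonempty := hA₁ne.mono hA₁A
  obtain ⟨ξ, hξ, hξ1⟩ := ZMod.exists_mem_add_one_notMem (zero_mem_quotientSet hA₁) hR
  obtain ⟨x, hx, y, hy, z, hz, w, hw, h_dilate⟩ :=
    exists_card_add_smul_le_of_mem_quotientSet hξ hA₁A
  have h_energy := card_pow_three_le_of_add_one_notMem_quotientSet hA₁ne hξ1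
  have h_peel := card_smul_sub_add_smul_sub_mul_pow_le (ne_of_mem_of_not_mem hb₀ hA0)
    (fun h ↦ hA0 (hA₁A h)) hN hx hy hz hw
  have h_PR := card_nsmul_sub_nsmul_mul_pow_le hAne 2 2
  have h_A₁A₁ : #(A₁ + A₁) ≤ #(A + A) := card_le_card (add_subset_add hA₁A hA₁A)
  have key : #A₁ ^ 3 * N ^ 4 * #A ^ 3 ≤ 9 * #(A + A) ^ 9 := by
    refine Nat.le_of_mul_le_mul_right ?_ hAne.card_pos
    calc #A₁ ^ 3 * N ^ 4 * #A ^ 3 * #A = #A₁ ^ 3 * N ^ 4 * #A ^ 4 := by ring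
      _ ≤ 9 * #(A₁ + A₁) * #(A₁ + ξ • A₁) * N ^ 4 * #A ^ 4 := by gcongr
      _ ≤ 9 * #(A + A) * #(z • A - w • A + (x • A - y • A)) * N ^ 4 * #A ^ 4 := by gcongr
      _ ≤ 9 * #(A + A) * (#(2 • A - 2 • A) * #(A + A) ^ 4) * #A ^ 4 := by
        rw [mul_assoc (9 * _)]; gcongr
      _ = 9 * #(A + A) ^ 5 * (#(2 • A - 2 • A) * #A ^ (2 + 2)) := by ring
      _ ≤ 9 * #(A + A) ^ 5 * (#(A + A) ^ (2 + 2) * #A) := by gcongr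
      _ = 9 * #(A + A) ^ 9 * #A := by ring
  exact_mod_cast key
end
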